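/- arXiv:2410.00415 — 2 statements merged into one kernel-verified Lean document; each statement's English description precedes it below -/
import Mathlib

section
/- Let p₁ = (p₁₁, p₁₂) and p₂ = (p₂₁, p₂₂) be points of ℝ² with p₁₁ ≠ p₂₁ and p₁₂ ≠ p₂₂, and let A be a 2×2 real matrix of rank 2 all of whose entries are nonzero. Then the singular set S(G(p₁, p₂, A)) is a rectangular hyperbola: there exist real numbers u, v, w with w ≠ 0 such that S(G(p₁, p₂, A)) = {(x, y) ∈ ℝ² : (x − u)(y − v) = w}. -/
open Matrix

noncomputable section

/-- A diffeomorphism of the plane: a smooth bijection with smooth inverse. -/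
def IsDiffeo (Φ : ℝ × ℝ → ℝ × ℝ) : Prop :=
  ∃ e : (ℝ × ℝ) ≃ (ℝ × ℝ), ⇑e = Φ ∧ ContDiff ℝ (⊤ : ℕ∞) ⇑e ∧ ContDiff ℝ (⊤ : ℕ∞) ⇑e.symm

/-- `F` and `G` are A-equivalent: `Ψ ∘ F ∘ Φ = G` for diffeomorphisms `Φ, Ψ` of the plane. -/
def AEquiv (F G : ℝ × ℝ → ℝ × ℝ) : Prop :=
  ∃ Φ Ψ : ℝ × ℝ → ℝ × ℝ, IsDiffeo Φ ∧ IsDiffeo Ψ ∧ Ψ ∘ F ∘ Φ = G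

/-- Generalized distance-squared mapping `G(p₁, p₂, A)`. -/
def Gmap (p₁ p₂ : ℝ × ℝ) (A : Matrix (Fin 2) (Fin 2) ℝ) : ℝ × ℝ → ℝ × ℝ :=
  fun z => (A 0 0 * (z.1 - p₁.1) ^ 2 + A 0 1 * (z.2 - p₁.2) ^ 2,
            A 1 0 * (z.1 - p₂.1) ^ 2 + A 1 1 * (z.2 - p₂.2) ^ 2)

/-- Singular set `S(F)`: points where the Jacobian determinant of `F` vanishes. -/
def singularSet (F : ℝ × ℝ → ℝ × ℝ) : Set (ℝ × ℝ) :=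
  {z | LinearMap.det (fderiv ℝ F z).toLinearMap = 0}

/-- Bivariate normal density `φ(·; μ, S)` on the plane. -/
def gauss (μ : Fin 2 → ℝ) (S : Matrix (Fin 2) (Fin 2) ℝ) (z : ℝ × ℝ) : ℝ :=
  (2 * Real.pi * Real.sqrt S.det)⁻¹ *
    Real.exp (-(1 / 2) * dotProduct ![z.1 - μ 0, z.2 - μ 1] (S⁻¹ *ᵥ ![z.1 - μ 0, z.2 - μ 1]))

/-- Mixture density `M_c = c f₁ + (1 - c) f₂`. -/
def mix (f₁ f₂ : ℝ × ℝ → ℝ) (c : ℝ) : ℝ × ℝ → ℝ :=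
  fun z => c * f₁ z + (1 - c) * f₂ z

/-- `f₁ = φ(·; μ₁, V₁)` and `f₂ = φ(·; μ₂, V₂)` are codirectional:
`μ₁ - μ₂` is an eigenvector of both `V₁` and `V₂`. -/
def Codirectional (μ₁ μ₂ : Fin 2 → ℝ) (V₁ V₂ : Matrix (Fin 2) (Fin 2) ℝ) : Prop :=
  ∃ a b : ℝ, V₁ *ᵥ (μ₁ - μ₂) = a • (μ₁ - μ₂) ∧ V₂ *ᵥ (μ₁ - μ₂) = b • (μ₁ - μ₂)

/-- The covariance matrices `V₁` and `V₂` are proportional. -/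
def Proportional (V₁ V₂ : Matrix (Fin 2) (Fin 2) ℝ) : Prop :=
  ∃ c : ℝ, 0 < c ∧ V₁ = c • V₂

/-- An affine line in the plane. -/
def IsAffineLine (ℓ : Set (ℝ × ℝ)) : Prop :=
  ∃ p v : ℝ × ℝ, v ≠ 0 ∧ ℓ = {q | ∃ t : ℝ, q = p + t • v}

end

theorem det_ne_zero_of_rank_two (A : Matrix (Fin 2) (Fin 2) ℝ) (hrank : A.rank = 2) :
    A.det ≠ 0 := by
  intro hdet
  have hr : A.rank = Module.finrank ℝ (LinearMap.range A.mulVecLin) := rfl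
  have htop : LinearMap.range A.mulVecLin = ⊤ := by
    apply Submodule.eq_top_of_finrank_eq
    rw [← hr, hrank]
    simp
  have hdet0 : LinearMap.det A.mulVecLin = 0 := by
    rw [← Matrix.toLin'_apply', LinearMap.det_toLin', hdet]
  exact absurd htop (ne_of_lt (LinearMap.range_lt_top_of_det_eq_zero hdet0))

open ContinuousLinearMap in
theorem hasFDerivAt_Gmap (p₁ p₂ : ℝ × ℝ) (A : Matrix (Fin 2) (Fin 2) ℝ) (z : ℝ × ℝ) :
    HasFDerivAt (Gmap p₁ p₂ A)
      (((2 * A 0 0 * (z.1 - p₁.1)) • fst ℝ ℝ ℝ + (2 * A 0 1 * (z.2 - p₁.2)) • snd ℝ ℝ ℝ).prod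
       ((2 * A 1 0 * (z.1 - p₂.1)) • fst ℝ ℝ ℝ + (2 * A 1 1 * (z.2 - p₂.2)) • snd ℝ ℝ ℝ)) z := by
  have k : ∀ (a b : ℝ) (q r : ℝ),
      HasFDerivAt (fun w : ℝ × ℝ => a * (w.1 - q) ^ 2 + b * (w.2 - r) ^ 2)
        ((2 * a * (z.1 - q)) • fst ℝ ℝ ℝ + (2 * b * (z.2 - r)) • snd ℝ ℝ ℝ) z := by
    intro a b q r
    have hf : HasFDerivAt (fun w : ℝ × ℝ => w.1 - q) (fst ℝ ℝ ℝ) z :=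
      (hasFDerivAt_fst (p := z)).sub_const q
    have hg : HasFDerivAt (fun w : ℝ × ℝ => w.2 - r) (snd ℝ ℝ ℝ) z :=
      (hasFDerivAt_snd (p := z)).sub_const r
    have h1 : HasFDerivAt (fun w : ℝ × ℝ => a * (w.1 - q) ^ 2)
        ((2 * a * (z.1 - q)) • fst ℝ ℝ ℝ) z := by
      have h := ((hf.mul hf).const_mul a)
      have e : (fun w : ℝ × ℝ => a * (w.1 - q) ^ 2)
          = fun w : ℝ × ℝ => a * ((w.1 - q) * (w.1 - q)) := by funext w; ring
      rw [e]
      refine h.congr_fderiv (ContinuousLinearMap.ext fun w => ?_)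
      simp
      ring
    have h2 : HasFDerivAt (fun w : ℝ × ℝ => b * (w.2 - r) ^ 2)
        ((2 * b * (z.2 - r)) • snd ℝ ℝ ℝ) z := by
      have h := ((hg.mul hg).const_mul b)
      have e : (fun w : ℝ × ℝ => b * (w.2 - r) ^ 2)
          = fun w : ℝ × ℝ => b * ((w.2 - r) * (w.2 - r)) := by funext w; ring
      rw [e]
      refine h.congr_fderiv (ContinuousLinearMap.ext fun w => ?_)
      simp
      ring
    exact h1.add h2
  exact HasFDerivAt.prodMk (k (A 0 0) (A 0 1) p₁.1 p₁.2) (k (A 1 0) (A 1 1) p₂.1 p₂.2)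

open ContinuousLinearMap in
theorem det_clm (α β γ δ : ℝ) :
    LinearMap.det (((α • fst ℝ ℝ ℝ + β • snd ℝ ℝ ℝ).prod
      (γ • fst ℝ ℝ ℝ + δ • snd ℝ ℝ ℝ)).toLinearMap) = α * δ - β * γ := by
  rw [← LinearMap.det_toMatrix (Module.Basis.finTwoProd ℝ), Matrix.det_fin_two]
  simp [LinearMap.toMatrix_apply, Module.Basis.finTwoProd]

theorem stmt_2 (p₁ p₂ : ℝ × ℝ) (h1 : p₁.1 ≠ p₂.1) (h2 : p₁.2 ≠ p₂.2)
    (A : Matrix (Fin 2) (Fin 2) ℝ) (hA : ∀ i j, A i j ≠ 0) (hrank : A.rank = 2) :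
    ∃ u v w : ℝ, w ≠ 0 ∧
      singularSet (Gmap p₁ p₂ A) = {z : ℝ × ℝ | (z.1 - u) * (z.2 - v) = w} := by
  set a := A 0 0 with ha
  set b := A 0 1 with hb
  set c := A 1 0 with hc
  set d := A 1 1 with hd
  have hD : a * d - b * c ≠ 0 := by
    have := det_ne_zero_of_rank_two A hrank
    rwa [Matrix.det_fin_two] at this
  set D : ℝ := a * d - b * c with hDdef
  refine ⟨(a * d * p₁.1 - b * c * p₂.1) / D, (a * d * p₂.2 - b * c * p₁.2) / D,
    a * d * b * c * (p₁.1 - p₂.1) * (p₂.2 - p₁.2) / D ^ 2, ?_, ?_⟩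
  · apply div_ne_zero
    · exact mul_ne_zero (mul_ne_zero (mul_ne_zero (mul_ne_zero
        (mul_ne_zero (hA 0 0) (hA 1 1)) (hA 0 1)) (hA 1 0)) (sub_ne_zero.mpr h1))
        (sub_ne_zero.mpr h2.symm)
    · exact pow_ne_zero 2 hD
  · ext z
    have hder := hasFDerivAt_Gmap p₁ p₂ A z
    have hfd := hder.fderiv
    simp only [singularSet, Set.mem_setOf_eq, hfd, det_clm]
    have key : (2 * a * (z.1 - p₁.1)) * (2 * d * (z.2 - p₂.2))
        - (2 * b * (z.2 - p₁.2)) * (2 * c * (z.1 - p₂.1))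
        = 4 * D * ((z.1 - (a * d * p₁.1 - b * c * p₂.1) / D)
            * (z.2 - (a * d * p₂.2 - b * c * p₁.2) / D)
          - a * d * b * c * (p₁.1 - p₂.1) * (p₂.2 - p₁.2) / D ^ 2) := by
      field_simp
      ring
    rw [key]
    have h4 : (4 : ℝ) * D ≠ 0 := mul_ne_zero four_ne_zero hD
    constructor
    · intro h
      have h0 := (mul_eq_zero.mp h).resolve_left h4
      exact sub_eq_zero.mp h0
    · intro h
      have h0 : (z.1 - (a * d * p₁.1 - b * c * p₂.1) / D)
            * (z.2 - (a * d * p₂.2 - b * c * p₁.2) / D)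
          - a * d * b * c * (p₁.1 - p₂.1) * (p₂.2 - p₁.2) / D ^ 2 = 0 :=
        sub_eq_zero.mpr h
      rw [h0, mul_zero]
end

section
/- Let f₁ = φ(·; μ₁, Σ₁) and f₂ = φ(·; μ₂, Σ₂) be bivariate normal densities whose covariance matrices are proportional, i.e., Σ₁ = kΣ₂ for some k > 0. Then for every c ∈ [0, 1], the set of modes (local maximum points) of the mixture density M_c = c f₁ + (1 − c) f₂ has at most 2 elements. -/
open Matrix

open Matrix Set Filter Topology

set_option linter.unreachableTactic false
set_option linter.unusedTactic false


lemma gauss_apply (μ : Fin 2 → ℝ) (V : Matrix (Fin 2) (Fin 2) ℝ) (z : ℝ × ℝ) :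
    gauss μ V z = (2 * Real.pi * Real.sqrt V.det)⁻¹ *
      Real.exp (-(1/2) * ((z.1 - μ 0) * (V⁻¹ 0 0 * (z.1 - μ 0) + V⁻¹ 0 1 * (z.2 - μ 1))
        + (z.2 - μ 1) * (V⁻¹ 1 0 * (z.1 - μ 0) + V⁻¹ 1 1 * (z.2 - μ 1)))) := by
  unfold gauss
  congr 1
  apply congrArg
  simp only [dotProduct, Matrix.mulVec, Fin.sum_univ_two, Matrix.cons_val_zero,
    Matrix.cons_val_one, Matrix.head_cons]
  try ring

lemma gauss_pos (μ : Fin 2 → ℝ) {V : Matrix (Fin 2) (Fin 2) ℝ} (hV : V.PosDef) (z : ℝ × ℝ) :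
    0 < gauss μ V z := by
  unfold gauss
  have hdet : (0:ℝ) < V.det := hV.det_pos
  have : (0:ℝ) < 2 * Real.pi * Real.sqrt V.det := by
    have := Real.pi_pos
    have := Real.sqrt_pos.2 hdet
    positivity
  positivity


lemma hasDerivAt_quadExp (C e f g t : ℝ) :
    HasDerivAt (fun t => C * Real.exp (e*t^2 + f*t + g))
      (C * Real.exp (e*t^2 + f*t + g) * (2*e*t + f)) t := by
  have h : HasDerivAt (fun t : ℝ => e*t^2 + f*t + g) (2*e*t + f) t := by
    have h1 := (hasDerivAt_pow 2 t).const_mul e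
    have h2 := (hasDerivAt_id t).const_mul f
    have := (h1.add h2).add_const g
    convert this using 1
    any_goals rfl
    push_cast; ring
  have := h.exp.const_mul C
  convert this using 1
  any_goals rfl
  ring

lemma hasDerivAt_gaussLike (A q s t : ℝ) :
    HasDerivAt (fun t => A * Real.exp (-(q/2)*(t-s)^2))
      (-(A*q*(t-s)) * Real.exp (-(q/2)*(t-s)^2)) t := by
  have h0 : HasDerivAt (fun t : ℝ => t - s) 1 t := (hasDerivAt_id t).sub_const s
  have h1 : HasDerivAt (fun t : ℝ => (t-s)^2) (2*(t-s)) t := by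
    have := h0.pow 2
    convert this using 1
    any_goals rfl
    push_cast; ring
  have h2 := ((h1.const_mul (-(q/2))).exp).const_mul A
  convert h2 using 1
  any_goals rfl
  ring

lemma gauss_hasDerivAt_dir (μ : Fin 2 → ℝ) (V : Matrix (Fin 2) (Fin 2) ℝ) (z : ℝ × ℝ) (u1 u2 : ℝ) :
    HasDerivAt (fun t => gauss μ V (z.1 + t * u1, z.2 + t * u2))
      (gauss μ V z * (-(1/2)) *
        (u1 * (2 * V⁻¹ 0 0 * (z.1 - μ 0) + (V⁻¹ 0 1 + V⁻¹ 1 0) * (z.2 - μ 1))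
          + u2 * ((V⁻¹ 0 1 + V⁻¹ 1 0) * (z.1 - μ 0) + 2 * V⁻¹ 1 1 * (z.2 - μ 1)))) 0 := by
  set p := V⁻¹ 0 0 with hp
  set q := V⁻¹ 0 1 with hq
  set q' := V⁻¹ 1 0 with hq'
  set r := V⁻¹ 1 1 with hr
  set X := z.1 - μ 0 with hX
  set Y := z.2 - μ 1 with hY
  set D := (2 * Real.pi * Real.sqrt V.det)⁻¹ with hD
  set e := -(1/2) * (p*u1^2 + (q+q')*u1*u2 + r*u2^2) with he
  set f := -(1/2) * (u1*(2*p*X + (q+q')*Y) + u2*((q+q')*X + 2*r*Y)) with hf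
  set g0 := -(1/2) * (X*(p*X + q*Y) + Y*(q'*X + r*Y)) with hg0
  have heq : ∀ t, gauss μ V (z.1 + t*u1, z.2 + t*u2) = D * Real.exp (e*t^2 + f*t + g0) := by
    intro t
    rw [gauss_apply]
    refine congrArg (fun w => D * w) (congrArg Real.exp ?_)
    dsimp only
    rw [he, hf, hg0, hp, hq, hq', hr, hX, hY]
    ring
  have hz : gauss μ V z = D * Real.exp g0 := by
    have h0 := heq 0
    norm_num at h0
    rw [← h0]
  have h := hasDerivAt_quadExp D e f g0 0
  have h' := h.congr_of_eventuallyEq (Filter.Eventually.of_forall fun t => heq t)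
  convert h' using 1
  any_goals rfl
  rw [hz]
  norm_num
  rw [hf]
  ring


open Set Filter Topology

/-- Between two local maxima of a differentiable function there is a zero of the derivative. -/
lemma exists_derivZero_between {g g' : ℝ → ℝ} (hder : ∀ t, HasDerivAt g (g' t) t)
    (hcont : Continuous g') {t1 t2 : ℝ} (h12 : t1 < t2)
    (h1 : IsLocalMax g t1) (h2 : IsLocalMax g t2) : ∃ z ∈ Set.Ioo t1 t2, g' z = 0 := by
  by_contra hno
  push_neg at hno
  set m := (t1 + t2) / 2 with hm_def
  have hm : m ∈ Ioo t1 t2 := ⟨by simp only [hm_def]; linarith, by simp only [hm_def]; linarith⟩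
  have hgc : ∀ s : Set ℝ, ContinuousOn g s := fun s => fun x _ => (hder x).continuousAt.continuousWithinAt
  rcases lt_or_gt_of_ne (hno m hm) with hneg | hpos
  · -- g' < 0 throughout, so g strictly anti on [t1,t2]; contradicts max at t2
    have hsign : ∀ x ∈ Ioo t1 t2, g' x < 0 := by
      intro x hx
      rcases lt_or_gt_of_ne (hno x hx) with h | h
      · exact h
      · exfalso
        rcases lt_trichotomy x m with hxm | rfl | hxm
        · obtain ⟨z, hz, hz0⟩ : (0:ℝ) ∈ g' '' Icc x m := by
            apply intermediate_value_Icc' hxm.le hcont.continuousOn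
            exact ⟨hneg.le, h.le⟩
          exact hno z ⟨hx.1.trans_le hz.1, lt_of_le_of_lt hz.2 hm.2⟩ hz0
        · linarith
        · obtain ⟨z, hz, hz0⟩ : (0:ℝ) ∈ g' '' Icc m x := by
            apply intermediate_value_Icc hxm.le hcont.continuousOn
            exact ⟨hneg.le, h.le⟩
          exact hno z ⟨hm.1.trans_le hz.1, lt_of_le_of_lt hz.2 hx.2⟩ hz0
    have hanti : StrictAntiOn g (Icc t1 t2) := by
      apply strictAntiOn_of_deriv_neg (convex_Icc t1 t2) (hgc _)
      intro x hx
      rw [interior_Icc] at hx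
      rw [(hder x).deriv]
      exact hsign x hx
    have hev : ∀ᶠ x in 𝓝[<] t2, g x ≤ g t2 := (h2.filter_mono nhdsWithin_le_nhds)
    have hIoo : Ioo t1 t2 ∈ 𝓝[<] t2 := Ioo_mem_nhdsLT h12
    obtain ⟨x, hx1, hx2⟩ := (hev.and (hIoo : ∀ᶠ x in _, x ∈ Ioo t1 t2)).exists
    have := hanti ⟨hx2.1.le, hx2.2.le⟩ ⟨h12.le, le_refl _⟩ hx2.2
    linarith
  · have hsign : ∀ x ∈ Ioo t1 t2, 0 < g' x := by
      intro x hx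
      rcases lt_or_gt_of_ne (hno x hx) with h | h
      · exfalso
        rcases lt_trichotomy x m with hxm | rfl | hxm
        · obtain ⟨z, hz, hz0⟩ : (0:ℝ) ∈ g' '' Icc x m := by
            apply intermediate_value_Icc hxm.le hcont.continuousOn
            exact ⟨h.le, hpos.le⟩
          exact hno z ⟨hx.1.trans_le hz.1, lt_of_le_of_lt hz.2 hm.2⟩ hz0
        · linarith
        · obtain ⟨z, hz, hz0⟩ : (0:ℝ) ∈ g' '' Icc m x := by
            apply intermediate_value_Icc' hxm.le hcont.continuousOn
            exact ⟨h.le, hpos.le⟩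
          exact hno z ⟨hm.1.trans_le hz.1, lt_of_le_of_lt hz.2 hx.2⟩ hz0
      · exact h
    have hmono : StrictMonoOn g (Icc t1 t2) := by
      apply strictMonoOn_of_deriv_pos (convex_Icc t1 t2) (hgc _)
      intro x hx
      rw [interior_Icc] at hx
      rw [(hder x).deriv]
      exact hsign x hx
    have hev : ∀ᶠ x in 𝓝[>] t1, g x ≤ g t1 := (h1.filter_mono nhdsWithin_le_nhds)
    have hIoo : Ioo t1 t2 ∈ 𝓝[>] t1 := Ioo_mem_nhdsGT h12
    obtain ⟨x, hx1, hx2⟩ := (hev.and (hIoo : ∀ᶠ x in _, x ∈ Ioo t1 t2)).exists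
    have := hmono ⟨le_refl _, h12.le⟩ ⟨hx2.1.le, hx2.2.le⟩ hx2.1
    linarith

section onedim
variable {A B q1 q2 : ℝ}

lemma oneD (hA : 0 < A) (hB : 0 < B) (hq1 : 0 < q1) (hq2 : 0 < q2) :
    {t : ℝ | IsLocalMax (fun t => A * Real.exp (-(q1/2)*(t-1)^2) + B * Real.exp (-(q2/2)*t^2)) t}.encard ≤ 2 := by
  set g : ℝ → ℝ := fun t => A * Real.exp (-(q1/2)*(t-1)^2) + B * Real.exp (-(q2/2)*t^2) with hg
  set g' : ℝ → ℝ := fun t => -(A*q1*(t-1)) * Real.exp (-(q1/2)*(t-1)^2)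
      + -(B*q2*t) * Real.exp (-(q2/2)*t^2) with hg'
  have hder : ∀ t, HasDerivAt g (g' t) t := by
    intro t
    have h1 := hasDerivAt_gaussLike A q1 1 t
    have h2 := hasDerivAt_gaussLike B q2 0 t
    simp only [sub_zero] at h2
    exact h1.add h2
  have hg'cont : Continuous g' := by
    rw [hg']; fun_prop
  -- zeros of g' lie in (0,1)
  have hZIoo : ∀ t, g' t = 0 → t ∈ Ioo (0:ℝ) 1 := by
    intro t h
    have E1 := Real.exp_pos (-(q1/2)*(t-1)^2)
    have E2 := Real.exp_pos (-(q2/2)*t^2)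
    simp only [hg'] at h
    constructor
    · by_contra h0
      push_neg at h0
      have hP : 0 < -(A*q1*(t-1)) * Real.exp (-(q1/2)*(t-1)^2) :=
        mul_pos (by nlinarith [mul_pos (mul_pos hA hq1) (show (0:ℝ) < 1-t by linarith)]) E1
      have hQ : 0 ≤ -(B*q2*t) * Real.exp (-(q2/2)*t^2) :=
        mul_nonneg (by nlinarith [mul_nonneg (mul_pos hB hq2).le (show (0:ℝ) ≤ -t by linarith)]) E2.le
      linarith
    · by_contra h0
      push_neg at h0
      have hP : -(A*q1*(t-1)) * Real.exp (-(q1/2)*(t-1)^2) ≤ 0 :=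
        mul_nonpos_of_nonpos_of_nonneg (by nlinarith [mul_nonneg (mul_pos hA hq1).le (show (0:ℝ) ≤ t-1 by linarith)]) E1.le
      have hQ : -(B*q2*t) * Real.exp (-(q2/2)*t^2) < 0 :=
        mul_neg_of_neg_of_pos (by nlinarith [mul_pos (mul_pos hB hq2) (show (0:ℝ) < t by linarith)]) E2
      linarith
  set ψ : ℝ → ℝ := fun t => Real.log (A*q1) + Real.log (1-t) - (q1/2)*(t-1)^2
      - (Real.log (B*q2) + Real.log t - (q2/2)*t^2) with hψ
  have hψ0 : ∀ t ∈ Ioo (0:ℝ) 1, g' t = 0 → ψ t = 0 := by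
    rintro t ⟨ht0, ht1⟩ h
    simp only [hg'] at h
    have key : A*q1*(1-t) * Real.exp (-(q1/2)*(t-1)^2) = B*q2*t * Real.exp (-(q2/2)*t^2) := by
      linear_combination h
    have hL : (0:ℝ) < A*q1*(1-t) := mul_pos (mul_pos hA hq1) (by linarith)
    have hR : (0:ℝ) < B*q2*t := by positivity
    have hlog := congrArg Real.log key
    rw [Real.log_mul hL.ne' (Real.exp_ne_zero _), Real.log_mul hR.ne' (Real.exp_ne_zero _),
      Real.log_exp, Real.log_exp,
      Real.log_mul (by positivity : (A*q1 : ℝ) ≠ 0) (by linarith : (1-t:ℝ) ≠ 0),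
      Real.log_mul (by positivity : (B*q2 : ℝ) ≠ 0) ht0.ne'] at hlog
    simp only [hψ]
    linarith
  set ψ₁ : ℝ → ℝ := fun t => -(1-t)⁻¹ - q1*(t-1) - t⁻¹ + q2*t with hψ₁
  set ψ₂ : ℝ → ℝ := fun t => -((1-t)^2)⁻¹ - q1 + (t^2)⁻¹ + q2 with hψ₂
  set ψ₃ : ℝ → ℝ := fun t => -2*((1-t)^3)⁻¹ - 2*(t^3)⁻¹ with hψ₃
  have hψder : ∀ t ∈ Ioo (0:ℝ) 1, HasDerivAt ψ (ψ₁ t) t := by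
    rintro t ⟨ht0, ht1⟩
    have h1t : (1 - t : ℝ) ≠ 0 := by linarith
    have ha : HasDerivAt (fun t : ℝ => Real.log (1-t)) (-1/(1-t)) t := by
      have := (((hasDerivAt_id t).const_sub 1)).log h1t
      convert this using 1
      any_goals rfl
    have hb : HasDerivAt (fun t : ℝ => (q1/2)*(t-1)^2) ((q1/2)*(2*(t-1))) t := by
      have := (((hasDerivAt_id t).sub_const 1).pow 2).const_mul (q1/2)
      convert this using 1
      any_goals rfl
      all_goals try push_cast
      all_goals try simp only [id_eq]
      all_goals ring
    have hc : HasDerivAt Real.log t⁻¹ t := Real.hasDerivAt_log ht0.ne'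
    have hd : HasDerivAt (fun t : ℝ => (q2/2)*t^2) ((q2/2)*(2*t)) t := by
      have := (hasDerivAt_pow 2 t).const_mul (q2/2)
      convert this using 1
      any_goals rfl
      all_goals try push_cast
      all_goals try simp only [id_eq]
      all_goals ring
    have := (((ha.const_add (Real.log (A*q1))).sub hb).sub (((hc.const_add (Real.log (B*q2)))).sub hd))
    convert this using 1
    any_goals rfl
    all_goals try simp only [hψ₁]
    all_goals try field_simp
    all_goals ring
  have hψ₁der : ∀ t ∈ Ioo (0:ℝ) 1, HasDerivAt ψ₁ (ψ₂ t) t := by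
    rintro t ⟨ht0, ht1⟩
    have h1t : (1 - t : ℝ) ≠ 0 := by linarith
    have ha : HasDerivAt (fun t : ℝ => ((1:ℝ)-t)⁻¹) (-(-1)/(1-t)^2) t :=
      ((hasDerivAt_id t).const_sub 1).inv h1t
    have hb : HasDerivAt (fun t : ℝ => q1*(t-1)) q1 t := by
      have := ((hasDerivAt_id t).sub_const 1).const_mul q1
      convert this using 1
      any_goals rfl
      all_goals ring
    have hc : HasDerivAt (fun t : ℝ => t⁻¹) (-1/t^2) t := by
      have := (hasDerivAt_id t).inv ht0.ne'
      convert this using 1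
      any_goals rfl
    have hd : HasDerivAt (fun t : ℝ => q2*t) q2 t := by
      have := (hasDerivAt_id t).const_mul q2
      convert this using 1
      any_goals rfl
      all_goals ring
    have := ((ha.neg.sub hb).sub hc).add hd
    convert this using 1
    any_goals rfl
    all_goals try simp only [hψ₂]
    all_goals try field_simp
    all_goals ring
  have hψ₂der : ∀ t ∈ Ioo (0:ℝ) 1, HasDerivAt ψ₂ (ψ₃ t) t := by
    rintro t ⟨ht0, ht1⟩
    have h1t : (1 - t : ℝ) ≠ 0 := by linarith
    have ha : HasDerivAt (fun t : ℝ => (((1:ℝ)-t)^2)⁻¹) (-(2*(1-t)^1*(-1))/((1-t)^2)^2) t :=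
      (((hasDerivAt_id t).const_sub 1).pow 2).inv (pow_ne_zero 2 h1t)
    have hc : HasDerivAt (fun t : ℝ => (t^2)⁻¹) (-(2*t^1*1)/(t^2)^2) t := by
      have := ((hasDerivAt_id t).pow 2).inv (pow_ne_zero 2 ht0.ne')
      convert this using 1
      any_goals rfl
      all_goals try push_cast
      all_goals try simp only [id_eq]
      all_goals ring
    have := ((ha.neg.sub_const q1).add hc).add_const q2
    convert this using 1
    any_goals rfl
    all_goals try simp only [hψ₃]
    all_goals try field_simp
    all_goals ring
  -- ψ₂ strictly decreasing on (0,1)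
  have hanti : StrictAntiOn ψ₂ (Ioo 0 1) := by
    apply strictAntiOn_of_deriv_neg (convex_Ioo 0 1)
    · exact fun x hx => (hψ₂der x hx).continuousAt.continuousWithinAt
    · intro x hx
      rw [interior_Ioo] at hx
      rw [(hψ₂der x hx).deriv]
      obtain ⟨hx0, hx1⟩ := hx
      have h1x : (0:ℝ) < 1 - x := by linarith
      have h1 : (0:ℝ) < ((1-x)^3)⁻¹ := by positivity
      have h2 : (0:ℝ) < (x^3)⁻¹ := by positivity
      simp only [hψ₃]
      nlinarith
  -- at most 2 zeros of ψ₁ in (0,1)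
  have hψ₁zeros : ∀ y1 y2 y3 : ℝ, y1 ∈ Ioo (0:ℝ) 1 → y2 ∈ Ioo (0:ℝ) 1 → y3 ∈ Ioo (0:ℝ) 1 →
      y1 < y2 → y2 < y3 → ψ₁ y1 = 0 → ψ₁ y2 = 0 → ψ₁ y3 = 0 → False := by
    intro y1 y2 y3 hy1 hy2 hy3 h12 h23 hz1 hz2 hz3
    have hsub12 : Icc y1 y2 ⊆ Ioo (0:ℝ) 1 := Icc_subset_Ioo hy1.1 hy2.2
    have hsub23 : Icc y2 y3 ⊆ Ioo (0:ℝ) 1 := Icc_subset_Ioo hy2.1 hy3.2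
    obtain ⟨z1, hz1m, hz1v⟩ := exists_hasDerivAt_eq_zero h12
      (fun x hx => (hψ₁der x (hsub12 hx)).continuousAt.continuousWithinAt)
      (hz1.trans hz2.symm)
      (fun x hx => hψ₁der x (hsub12 (Ioo_subset_Icc_self hx)))
    obtain ⟨z2, hz2m, hz2v⟩ := exists_hasDerivAt_eq_zero h23
      (fun x hx => (hψ₁der x (hsub23 hx)).continuousAt.continuousWithinAt)
      (hz2.trans hz3.symm)
      (fun x hx => hψ₁der x (hsub23 (Ioo_subset_Icc_self hx)))
    have hzz : z1 < z2 := hz1m.2.trans hz2m.1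
    have := hanti (hsub12 (Ioo_subset_Icc_self hz1m)) (hsub23 (Ioo_subset_Icc_self hz2m)) hzz
    rw [hz1v, hz2v] at this
    exact lt_irrefl 0 this
  -- at most 3 zeros of ψ in (0,1)
  have hψzeros : ∀ x1 x2 x3 x4 : ℝ, x1 ∈ Ioo (0:ℝ) 1 → x2 ∈ Ioo (0:ℝ) 1 → x3 ∈ Ioo (0:ℝ) 1 →
      x4 ∈ Ioo (0:ℝ) 1 → x1 < x2 → x2 < x3 → x3 < x4 →
      ψ x1 = 0 → ψ x2 = 0 → ψ x3 = 0 → ψ x4 = 0 → False := by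
    intro x1 x2 x3 x4 h1 h2 h3 h4 h12 h23 h34 hv1 hv2 hv3 hv4
    have rolle : ∀ a b : ℝ, a ∈ Ioo (0:ℝ) 1 → b ∈ Ioo (0:ℝ) 1 → a < b → ψ a = 0 → ψ b = 0 →
        ∃ z ∈ Ioo a b, ψ₁ z = 0 := by
      intro a b ha hb hab hva hvb
      have hsub : Icc a b ⊆ Ioo (0:ℝ) 1 := Icc_subset_Ioo ha.1 hb.2
      exact exists_hasDerivAt_eq_zero hab
        (fun x hx => (hψder x (hsub hx)).continuousAt.continuousWithinAt)
        (hva.trans hvb.symm)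
        (fun x hx => hψder x (hsub (Ioo_subset_Icc_self hx)))
    obtain ⟨y1, hy1m, hy1v⟩ := rolle x1 x2 h1 h2 h12 hv1 hv2
    obtain ⟨y2, hy2m, hy2v⟩ := rolle x2 x3 h2 h3 h23 hv2 hv3
    obtain ⟨y3, hy3m, hy3v⟩ := rolle x3 x4 h3 h4 h34 hv3 hv4
    have hy1 : y1 ∈ Ioo (0:ℝ) 1 := ⟨h1.1.trans hy1m.1, hy1m.2.trans h2.2⟩
    have hy2 : y2 ∈ Ioo (0:ℝ) 1 := ⟨h2.1.trans hy2m.1, hy2m.2.trans h3.2⟩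
    have hy3 : y3 ∈ Ioo (0:ℝ) 1 := ⟨h3.1.trans hy3m.1, hy3m.2.trans h4.2⟩
    exact hψ₁zeros y1 y2 y3 hy1 hy2 hy3 (hy1m.2.trans hy2m.1) (hy2m.2.trans hy3m.1) hy1v hy2v hy3v
  -- three local maxima impossible
  set S := {t : ℝ | IsLocalMax g t} with hS
  have build : ∀ u v w : ℝ, u ∈ S → v ∈ S → w ∈ S → u < v → v < w → False := by
    intro u v w hu hv hw huv hvw
    have hu' : g' u = 0 := hu.hasDerivAt_eq_zero (hder u)
    have hv' : g' v = 0 := hv.hasDerivAt_eq_zero (hder v)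
    obtain ⟨z1, hz1m, hz1v⟩ := exists_derivZero_between hder hg'cont huv hu hv
    obtain ⟨z2, hz2m, hz2v⟩ := exists_derivZero_between hder hg'cont hvw hv hw
    have hIu := hZIoo u hu'
    have hIv := hZIoo v hv'
    have hIz1 := hZIoo z1 hz1v
    have hIz2 := hZIoo z2 hz2v
    exact hψzeros u z1 v z2 hIu hIz1 hIv hIz2 hz1m.1 hz1m.2 hz2m.1
      (hψ0 u hIu hu') (hψ0 z1 hIz1 hz1v) (hψ0 v hIv hv') (hψ0 z2 hIz2 hz2v)
  by_contra hScard
  push_neg at hScard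
  have h3 : (3:ℕ∞) ≤ S.encard := Order.add_one_le_of_lt hScard
  obtain ⟨t, hts, htc⟩ := Set.exists_subset_encard_eq h3
  obtain ⟨x, y, z, hxy, hxz, hyz, rfl⟩ := Set.encard_eq_three.1 htc
  have hx : x ∈ S := hts (by simp)
  have hy : y ∈ S := hts (by simp)
  have hz : z ∈ S := hts (by simp)
  rcases lt_trichotomy x y with h1 | h1 | h1
  · rcases lt_trichotomy y z with h2 | h2 | h2
    · exact build x y z hx hy hz h1 h2
    · exact hyz h2
    · rcases lt_trichotomy x z with h3' | h3' | h3'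
      · exact build x z y hx hz hy h3' h2
      · exact hxz h3'
      · exact build z x y hz hx hy h3' h1
  · exact hxy h1
  · rcases lt_trichotomy x z with h2 | h2 | h2
    · exact build y x z hy hx hz h1 h2
    · exact hxz h2
    · rcases lt_trichotomy y z with h3' | h3' | h3'
      · exact build y z x hy hz hx h3' h2
      · exact hyz h3'
      · exact build z y x hz hy hx h3' h1

end onedim

lemma convex_point {X Y b a t : ℝ} (hsum : X + Y ≠ 0) (h : X*(t - a) + Y*(t - b) = 0) :
    b + (X/(X+Y))*(a - b) = t := by
  field_simp
  linear_combination -h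

theorem stmt_15 (μ₁ μ₂ : Fin 2 → ℝ) (V₁ V₂ : Matrix (Fin 2) (Fin 2) ℝ)
    (h₁ : V₁.PosDef) (h₂ : V₂.PosDef) (hprop : Proportional V₁ V₂)
    (c : ℝ) (hc : c ∈ Set.Icc (0 : ℝ) 1) :
    {z : ℝ × ℝ | IsLocalMax (mix (gauss μ₁ V₁) (gauss μ₂ V₂) c) z}.encard ≤ 2 := by
  obtain ⟨k, hk, hV12⟩ := hprop
  obtain ⟨hc0, hc1⟩ := hc
  set M := mix (gauss μ₁ V₁) (gauss μ₂ V₂) c with hM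
  set S := {z : ℝ × ℝ | IsLocalMax M z} with hSdef
  have hdet2 : V₂.det ≠ 0 := h₂.det_pos.ne'
  have hsym : V₂⁻¹ 1 0 = V₂⁻¹ 0 1 := by
    have h := (h₂.inv).1
    calc V₂⁻¹ 1 0 = (V₂⁻¹)ᴴ 1 0 := by rw [h]
    _ = star (V₂⁻¹ 0 1) := Matrix.conjTranspose_apply _ _ _
    _ = V₂⁻¹ 0 1 := star_trivial _
  have hTdet : V₂⁻¹ 0 0 * V₂⁻¹ 1 1 - V₂⁻¹ 0 1 * V₂⁻¹ 0 1 ≠ 0 := by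
    have h := (h₂.inv).det_pos
    rw [Matrix.det_fin_two, hsym] at h
    exact h.ne'
  have hT1 : V₁⁻¹ = k⁻¹ • V₂⁻¹ := by
    apply Matrix.inv_eq_right_inv
    rw [hV12, Matrix.smul_mul, Matrix.mul_smul, smul_smul,
      Matrix.mul_nonsing_inv _ (Ne.isUnit hdet2), mul_inv_cancel₀ hk.ne', one_smul]
  have hT1e : ∀ i j, V₁⁻¹ i j = k⁻¹ * V₂⁻¹ i j := by
    intro i j; rw [hT1]; simp [Matrix.smul_apply]
  have hkinv : (0:ℝ) < k⁻¹ := inv_pos.2 hk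
  -- gradient equations at a local maximum
  have hgrad : ∀ z : ℝ × ℝ, IsLocalMax M z →
      (c * gauss μ₁ V₁ z * k⁻¹) * (z.1 - μ₁ 0) + ((1-c) * gauss μ₂ V₂ z) * (z.1 - μ₂ 0) = 0 ∧
      (c * gauss μ₁ V₁ z * k⁻¹) * (z.2 - μ₁ 1) + ((1-c) * gauss μ₂ V₂ z) * (z.2 - μ₂ 1) = 0 := by
    intro z hz
    have hdirEq : ∀ u1 u2 : ℝ,
        c * (gauss μ₁ V₁ z * (-(1/2)) *
          (u1 * (2 * V₁⁻¹ 0 0 * (z.1 - μ₁ 0) + (V₁⁻¹ 0 1 + V₁⁻¹ 1 0) * (z.2 - μ₁ 1))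
            + u2 * ((V₁⁻¹ 0 1 + V₁⁻¹ 1 0) * (z.1 - μ₁ 0) + 2 * V₁⁻¹ 1 1 * (z.2 - μ₁ 1))))
        + (1-c) * (gauss μ₂ V₂ z * (-(1/2)) *
          (u1 * (2 * V₂⁻¹ 0 0 * (z.1 - μ₂ 0) + (V₂⁻¹ 0 1 + V₂⁻¹ 1 0) * (z.2 - μ₂ 1))
            + u2 * ((V₂⁻¹ 0 1 + V₂⁻¹ 1 0) * (z.1 - μ₂ 0) + 2 * V₂⁻¹ 1 1 * (z.2 - μ₂ 1)))) = 0 := by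
      intro u1 u2
      have hγ : ContinuousAt (fun t : ℝ => ((z.1 + t*u1, z.2 + t*u2) : ℝ × ℝ)) 0 := by fun_prop
      have hcomp : IsLocalMax (M ∘ (fun t : ℝ => ((z.1 + t*u1, z.2 + t*u2) : ℝ × ℝ))) 0 := by
        apply IsMaxFilter.comp_tendsto _ hγ
        simp only [zero_mul, add_zero, Prod.mk.eta]; exact hz
      have hder : HasDerivAt (M ∘ (fun t : ℝ => ((z.1 + t*u1, z.2 + t*u2) : ℝ × ℝ)))
          (c * (gauss μ₁ V₁ z * (-(1/2)) *
            (u1 * (2 * V₁⁻¹ 0 0 * (z.1 - μ₁ 0) + (V₁⁻¹ 0 1 + V₁⁻¹ 1 0) * (z.2 - μ₁ 1))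
              + u2 * ((V₁⁻¹ 0 1 + V₁⁻¹ 1 0) * (z.1 - μ₁ 0) + 2 * V₁⁻¹ 1 1 * (z.2 - μ₁ 1))))
          + (1-c) * (gauss μ₂ V₂ z * (-(1/2)) *
            (u1 * (2 * V₂⁻¹ 0 0 * (z.1 - μ₂ 0) + (V₂⁻¹ 0 1 + V₂⁻¹ 1 0) * (z.2 - μ₂ 1))
              + u2 * ((V₂⁻¹ 0 1 + V₂⁻¹ 1 0) * (z.1 - μ₂ 0) + 2 * V₂⁻¹ 1 1 * (z.2 - μ₂ 1))))) 0 := by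
        have h1 := (gauss_hasDerivAt_dir μ₁ V₁ z u1 u2).const_mul c
        have h2 := (gauss_hasDerivAt_dir μ₂ V₂ z u1 u2).const_mul (1-c)
        exact h1.add h2
      exact hcomp.hasDerivAt_eq_zero hder
    have E1 := hdirEq 1 0
    have E2 := hdirEq 0 1
    rw [hT1e 0 0, hT1e 0 1, hT1e 1 0, hT1e 1 1, hsym] at E1 E2
    constructor
    · have h1 : V₂⁻¹ 0 0 * ((c * gauss μ₁ V₁ z * k⁻¹) * (z.1 - μ₁ 0) + ((1-c) * gauss μ₂ V₂ z) * (z.1 - μ₂ 0))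
          + V₂⁻¹ 0 1 * ((c * gauss μ₁ V₁ z * k⁻¹) * (z.2 - μ₁ 1) + ((1-c) * gauss μ₂ V₂ z) * (z.2 - μ₂ 1)) = 0 := by
        linear_combination (-1 : ℝ) * E1
      have h2 : V₂⁻¹ 0 1 * ((c * gauss μ₁ V₁ z * k⁻¹) * (z.1 - μ₁ 0) + ((1-c) * gauss μ₂ V₂ z) * (z.1 - μ₂ 0))
          + V₂⁻¹ 1 1 * ((c * gauss μ₁ V₁ z * k⁻¹) * (z.2 - μ₁ 1) + ((1-c) * gauss μ₂ V₂ z) * (z.2 - μ₂ 1)) = 0 := by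
        linear_combination (-1 : ℝ) * E2
      have h3 : (V₂⁻¹ 0 0 * V₂⁻¹ 1 1 - V₂⁻¹ 0 1 * V₂⁻¹ 0 1) *
          ((c * gauss μ₁ V₁ z * k⁻¹) * (z.1 - μ₁ 0) + ((1-c) * gauss μ₂ V₂ z) * (z.1 - μ₂ 0)) = 0 := by
        linear_combination V₂⁻¹ 1 1 * h1 - V₂⁻¹ 0 1 * h2
      rcases mul_eq_zero.1 h3 with h | h
      · exact absurd h hTdet
      · exact h
    · have h1 : V₂⁻¹ 0 0 * ((c * gauss μ₁ V₁ z * k⁻¹) * (z.1 - μ₁ 0) + ((1-c) * gauss μ₂ V₂ z) * (z.1 - μ₂ 0))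
          + V₂⁻¹ 0 1 * ((c * gauss μ₁ V₁ z * k⁻¹) * (z.2 - μ₁ 1) + ((1-c) * gauss μ₂ V₂ z) * (z.2 - μ₂ 1)) = 0 := by
        linear_combination (-1 : ℝ) * E1
      have h2 : V₂⁻¹ 0 1 * ((c * gauss μ₁ V₁ z * k⁻¹) * (z.1 - μ₁ 0) + ((1-c) * gauss μ₂ V₂ z) * (z.1 - μ₂ 0))
          + V₂⁻¹ 1 1 * ((c * gauss μ₁ V₁ z * k⁻¹) * (z.2 - μ₁ 1) + ((1-c) * gauss μ₂ V₂ z) * (z.2 - μ₂ 1)) = 0 := by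
        linear_combination (-1 : ℝ) * E2
      have h3 : (V₂⁻¹ 0 0 * V₂⁻¹ 1 1 - V₂⁻¹ 0 1 * V₂⁻¹ 0 1) *
          ((c * gauss μ₁ V₁ z * k⁻¹) * (z.2 - μ₁ 1) + ((1-c) * gauss μ₂ V₂ z) * (z.2 - μ₂ 1)) = 0 := by
        linear_combination V₂⁻¹ 0 0 * h2 - V₂⁻¹ 0 1 * h1
      rcases mul_eq_zero.1 h3 with h | h
      · exact absurd h hTdet
      · exact h
  have hF₁ : ∀ z, 0 < gauss μ₁ V₁ z := gauss_pos μ₁ h₁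
  have hF₂ : ∀ z, 0 < gauss μ₂ V₂ z := gauss_pos μ₂ h₂
  have hsingle : ∀ w : ℝ × ℝ, S ⊆ {w} → S.encard ≤ 2 := by
    intro w hsub
    calc S.encard ≤ ({w} : Set (ℝ × ℝ)).encard := Set.encard_mono hsub
      _ = 1 := Set.encard_singleton _
      _ ≤ 2 := by norm_num
  rcases eq_or_lt_of_le hc0 with hc0' | hc0'
  · -- c = 0 : only mode is μ₂
    apply hsingle ((μ₂ 0, μ₂ 1) : ℝ × ℝ)
    intro z hz
    obtain ⟨e1, e2⟩ := hgrad z hz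
    rw [← hc0'] at e1 e2
    have h1 : gauss μ₂ V₂ z * (z.1 - μ₂ 0) = 0 := by linear_combination e1
    have h2 : gauss μ₂ V₂ z * (z.2 - μ₂ 1) = 0 := by linear_combination e2
    rcases mul_eq_zero.1 h1 with h | h
    · exact absurd h (hF₂ z).ne'
    rcases mul_eq_zero.1 h2 with h' | h'
    · exact absurd h' (hF₂ z).ne'
    simp only [Set.mem_singleton_iff, Prod.ext_iff]
    exact ⟨by linarith, by linarith⟩
  rcases eq_or_lt_of_le hc1 with hc1' | hc1'
  · -- c = 1 : only mode is μ₁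
    apply hsingle ((μ₁ 0, μ₁ 1) : ℝ × ℝ)
    intro z hz
    obtain ⟨e1, e2⟩ := hgrad z hz
    rw [hc1'] at e1 e2
    have h1 : gauss μ₁ V₁ z * k⁻¹ * (z.1 - μ₁ 0) = 0 := by linear_combination e1
    have h2 : gauss μ₁ V₁ z * k⁻¹ * (z.2 - μ₁ 1) = 0 := by linear_combination e2
    have hα : gauss μ₁ V₁ z * k⁻¹ ≠ 0 := (mul_pos (hF₁ z) hkinv).ne'
    rcases mul_eq_zero.1 h1 with h | h
    · exact absurd h hα
    rcases mul_eq_zero.1 h2 with h' | h'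
    · exact absurd h' hα
    simp only [Set.mem_singleton_iff, Prod.ext_iff]
    exact ⟨by linarith, by linarith⟩
  -- 0 < c < 1
  by_cases hd : μ₁ 0 = μ₂ 0 ∧ μ₁ 1 = μ₂ 1
  · -- equal means : only mode is μ₂
    apply hsingle ((μ₂ 0, μ₂ 1) : ℝ × ℝ)
    intro z hz
    obtain ⟨e1, e2⟩ := hgrad z hz
    have hαpos : 0 < c * gauss μ₁ V₁ z * k⁻¹ := mul_pos (mul_pos hc0' (hF₁ z)) hkinv
    have hβpos : 0 < (1-c) * gauss μ₂ V₂ z := mul_pos (by linarith) (hF₂ z)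
    have h1 : (c * gauss μ₁ V₁ z * k⁻¹ + (1-c) * gauss μ₂ V₂ z) * (z.1 - μ₂ 0) = 0 := by
      linear_combination e1 + (c * gauss μ₁ V₁ z * k⁻¹) * hd.1
    have h2 : (c * gauss μ₁ V₁ z * k⁻¹ + (1-c) * gauss μ₂ V₂ z) * (z.2 - μ₂ 1) = 0 := by
      linear_combination e2 + (c * gauss μ₁ V₁ z * k⁻¹) * hd.2
    have hsum : c * gauss μ₁ V₁ z * k⁻¹ + (1-c) * gauss μ₂ V₂ z ≠ 0 := by positivity
    rcases mul_eq_zero.1 h1 with h | h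
    · exact absurd h hsum
    rcases mul_eq_zero.1 h2 with h' | h'
    · exact absurd h' hsum
    simp only [Set.mem_singleton_iff, Prod.ext_iff]
    exact ⟨by linarith, by linarith⟩
  · -- distinct means : modes lie on the line through μ₁ μ₂
    set ℓ : ℝ → ℝ × ℝ := fun t => (μ₂ 0 + t*(μ₁ 0 - μ₂ 0), μ₂ 1 + t*(μ₁ 1 - μ₂ 1)) with hℓ
    set q2 : ℝ := (μ₁ 0 - μ₂ 0) * (V₂⁻¹ 0 0 * (μ₁ 0 - μ₂ 0) + V₂⁻¹ 0 1 * (μ₁ 1 - μ₂ 1))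
        + (μ₁ 1 - μ₂ 1) * (V₂⁻¹ 0 1 * (μ₁ 0 - μ₂ 0) + V₂⁻¹ 1 1 * (μ₁ 1 - μ₂ 1)) with hq2
    have hq2pos : 0 < q2 := by
      have hdvec : (![μ₁ 0 - μ₂ 0, μ₁ 1 - μ₂ 1] : Fin 2 → ℝ) ≠ 0 := by
        intro hcontr
        apply hd
        have h0 := congrFun hcontr 0
        have h1 := congrFun hcontr 1
        simp only [Matrix.cons_val_zero, Matrix.cons_val_one, Matrix.head_cons, Pi.zero_apply] at h0 h1
        constructor <;> linarith
      have hpos := (h₂.inv).dotProduct_mulVec_pos hdvec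
      simp only [dotProduct, Matrix.mulVec, Fin.sum_univ_two, Matrix.cons_val_zero,
        Matrix.cons_val_one, Matrix.head_cons, Pi.star_apply, star_trivial] at hpos
      rw [hsym] at hpos
      rw [hq2]
      nlinarith [hpos]
    have hq1pos : 0 < k⁻¹ * q2 := mul_pos hkinv hq2pos
    have hC1 : 0 < (2*Real.pi*Real.sqrt V₁.det)⁻¹ := by
      have := Real.pi_pos
      have := Real.sqrt_pos.2 h₁.det_pos
      positivity
    have hC2 : 0 < (2*Real.pi*Real.sqrt V₂.det)⁻¹ := by
      have := Real.pi_pos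
      have := Real.sqrt_pos.2 h₂.det_pos
      positivity
    have hApos : 0 < c * (2*Real.pi*Real.sqrt V₁.det)⁻¹ := mul_pos hc0' hC1
    have hBpos : 0 < (1-c) * (2*Real.pi*Real.sqrt V₂.det)⁻¹ := mul_pos (by linarith) hC2
    have hgl1 : ∀ t, gauss μ₁ V₁ (ℓ t)
        = (2*Real.pi*Real.sqrt V₁.det)⁻¹ * Real.exp (-(k⁻¹*q2/2)*(t-1)^2) := by
      intro t
      rw [gauss_apply]
      refine congrArg (fun w => (2*Real.pi*Real.sqrt V₁.det)⁻¹ * w) (congrArg Real.exp ?_)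
      rw [hℓ]
      dsimp only
      rw [hT1e 0 0, hT1e 0 1, hT1e 1 0, hT1e 1 1, hsym, hq2]
      ring
    have hgl2 : ∀ t, gauss μ₂ V₂ (ℓ t)
        = (2*Real.pi*Real.sqrt V₂.det)⁻¹ * Real.exp (-(q2/2)*t^2) := by
      intro t
      rw [gauss_apply]
      refine congrArg (fun w => (2*Real.pi*Real.sqrt V₂.det)⁻¹ * w) (congrArg Real.exp ?_)
      rw [hℓ]
      dsimp only
      rw [hsym, hq2]
      ring
    have hline : (M ∘ ℓ) = fun t => (c * (2*Real.pi*Real.sqrt V₁.det)⁻¹)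
          * Real.exp (-(k⁻¹*q2/2)*(t-1)^2)
        + ((1-c) * (2*Real.pi*Real.sqrt V₂.det)⁻¹) * Real.exp (-(q2/2)*t^2) := by
      funext t
      simp only [Function.comp, hM, mix, hgl1 t, hgl2 t]
      ring
    have hsub : S ⊆ ℓ '' {t | IsLocalMax (M ∘ ℓ) t} := by
      intro z hz
      obtain ⟨e1, e2⟩ := hgrad z hz
      have hαpos : 0 < c * gauss μ₁ V₁ z * k⁻¹ := mul_pos (mul_pos hc0' (hF₁ z)) hkinv
      have hβpos : 0 < (1-c) * gauss μ₂ V₂ z := mul_pos (by linarith) (hF₂ z)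
      have hsum : (0:ℝ) < c * gauss μ₁ V₁ z * k⁻¹ + (1-c) * gauss μ₂ V₂ z := by linarith
      set s : ℝ := (c * gauss μ₁ V₁ z * k⁻¹) / (c * gauss μ₁ V₁ z * k⁻¹ + (1-c) * gauss μ₂ V₂ z)
        with hs
      have hzeq : ℓ s = z := by
        rw [hℓ, hs]
        dsimp only
        rw [Prod.ext_iff]
        constructor
        · exact convex_point hsum.ne' e1
        · exact convex_point hsum.ne' e2
      refine ⟨s, ?_, hzeq⟩
      simp only [Set.mem_setOf_eq]
      apply IsMaxFilter.comp_tendsto _ (by rw [hℓ]; fun_prop : ContinuousAt ℓ s)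
      rw [hzeq]
      exact hz
    calc S.encard ≤ (ℓ '' {t | IsLocalMax (M ∘ ℓ) t}).encard := Set.encard_mono hsub
      _ ≤ {t | IsLocalMax (M ∘ ℓ) t}.encard := Set.encard_image_le _ _
      _ ≤ 2 := by rw [hline]; exact oneD hApos hBpos hq1pos hq2pos
end
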